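/- Under the rank condition: B₁B₁ᵀ = B₁B₂ᵀ = B₂B₁ᵀ = (1/T)·Ω̂_LS⁻¹, B₂B₂ᵀ = (1/T)·Ω̂_IV⁻¹, C₁C₁ᵀ = (1/T)·(Ω̂_IV⁻¹ − Ω̂_LS⁻¹) = (1/T)·Δ̂, C₁Ψ₀ = (1/T)·C₁, and Ψ₀Ψ₀ = (1/T)·Ψ₀. -/

import Mathlib

/-!
`M₁` and `N₁ = P̄[X] - P̄[X₁]` are orthogonal projections with `M₁N₁ = N₁`, so in every product
`BᵢBⱼᵀ = (YᵀQY)⁻¹YᵀQRY(YᵀRY)⁻¹` the middle factor collapses and what remains is the inverse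
Gram matrix of the larger projection. Hence `C₁C₁ᵀ = (YᵀN₁Y)⁻¹ - (YᵀM₁Y)⁻¹ = (1/T)Δ̂`, which is
invertible because it equals `(YᵀN₁Y)⁻¹(YᵀMY)(YᵀM₁Y)⁻¹` (as `M = M₁ - N₁`). For any `C` with
`CCᵀ = cD`, `D` invertible, the matrix `Ψ = CᵀD⁻¹C` satisfies `CΨ = cC` and `Ψ² = cΨ`.
-/

open Matrix

variable {T G k₁ k₂ : ℕ}

/-- Orthogonal projection `P̄[A] = A(AᵀA)⁻¹Aᵀ` onto the column space of `A`. -/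
noncomputable def projM {n : Type*} [Fintype n] [DecidableEq n]
    (A : Matrix (Fin T) n ℝ) : Matrix (Fin T) (Fin T) ℝ :=
  A * (Aᵀ * A)⁻¹ * Aᵀ

/-- The annihilator `M̄[A] = I - P̄[A]`. -/
noncomputable def annM {n : Type*} [Fintype n] [DecidableEq n]
    (A : Matrix (Fin T) n ℝ) : Matrix (Fin T) (Fin T) ℝ :=
  1 - projM A

noncomputable def M1 (X₁ : Matrix (Fin T) (Fin k₁) ℝ) : Matrix (Fin T) (Fin T) ℝ :=
  annM X₁

noncomputable def Pm (X₁ : Matrix (Fin T) (Fin k₁) ℝ) (X₂ : Matrix (Fin T) (Fin k₂) ℝ) :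
    Matrix (Fin T) (Fin T) ℝ :=
  projM (fromCols X₁ X₂)

noncomputable def Mm (X₁ : Matrix (Fin T) (Fin k₁) ℝ) (X₂ : Matrix (Fin T) (Fin k₂) ℝ) :
    Matrix (Fin T) (Fin T) ℝ :=
  annM (fromCols X₁ X₂)

noncomputable def N1 (X₁ : Matrix (Fin T) (Fin k₁) ℝ) (X₂ : Matrix (Fin T) (Fin k₂) ℝ) :
    Matrix (Fin T) (Fin T) ℝ :=
  M1 X₁ * Pm X₁ X₂

noncomputable def B1 (Y : Matrix (Fin T) (Fin G) ℝ) (X₁ : Matrix (Fin T) (Fin k₁) ℝ) :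
    Matrix (Fin G) (Fin T) ℝ :=
  (Yᵀ * M1 X₁ * Y)⁻¹ * (Yᵀ * M1 X₁)

noncomputable def B2 (Y : Matrix (Fin T) (Fin G) ℝ) (X₁ : Matrix (Fin T) (Fin k₁) ℝ)
    (X₂ : Matrix (Fin T) (Fin k₂) ℝ) : Matrix (Fin G) (Fin T) ℝ :=
  (Yᵀ * N1 X₁ X₂ * Y)⁻¹ * (Yᵀ * N1 X₁ X₂)

noncomputable def C1 (Y : Matrix (Fin T) (Fin G) ℝ) (X₁ : Matrix (Fin T) (Fin k₁) ℝ)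
    (X₂ : Matrix (Fin T) (Fin k₂) ℝ) : Matrix (Fin G) (Fin T) ℝ :=
  B2 Y X₁ X₂ - B1 Y X₁

/-- OLS estimator `β̂`. -/
noncomputable def betaOLS (y : Fin T → ℝ) (Y : Matrix (Fin T) (Fin G) ℝ)
    (X₁ : Matrix (Fin T) (Fin k₁) ℝ) : Fin G → ℝ :=
  B1 Y X₁ *ᵥ y

/-- 2SLS estimator `β̃`. -/
noncomputable def beta2S (y : Fin T → ℝ) (Y : Matrix (Fin T) (Fin G) ℝ)
    (X₁ : Matrix (Fin T) (Fin k₁) ℝ) (X₂ : Matrix (Fin T) (Fin k₂) ℝ) : Fin G → ℝ :=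
  B2 Y X₁ X₂ *ᵥ y

noncomputable def OmIV (Y : Matrix (Fin T) (Fin G) ℝ) (X₁ : Matrix (Fin T) (Fin k₁) ℝ)
    (X₂ : Matrix (Fin T) (Fin k₂) ℝ) : Matrix (Fin G) (Fin G) ℝ :=
  (T : ℝ)⁻¹ • (Yᵀ * N1 X₁ X₂ * Y)

noncomputable def OmLS (Y : Matrix (Fin T) (Fin G) ℝ) (X₁ : Matrix (Fin T) (Fin k₁) ℝ) :
    Matrix (Fin G) (Fin G) ℝ :=
  (T : ℝ)⁻¹ • (Yᵀ * M1 X₁ * Y)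

noncomputable def SigV (Y : Matrix (Fin T) (Fin G) ℝ) (X₁ : Matrix (Fin T) (Fin k₁) ℝ)
    (X₂ : Matrix (Fin T) (Fin k₂) ℝ) : Matrix (Fin G) (Fin G) ℝ :=
  (T : ℝ)⁻¹ • (Yᵀ * Mm X₁ X₂ * Y)

noncomputable def Dhat (Y : Matrix (Fin T) (Fin G) ℝ) (X₁ : Matrix (Fin T) (Fin k₁) ℝ)
    (X₂ : Matrix (Fin T) (Fin k₂) ℝ) : Matrix (Fin G) (Fin G) ℝ :=
  (OmIV Y X₁ X₂)⁻¹ - (OmLS Y X₁)⁻¹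

noncomputable def Psi0 (Y : Matrix (Fin T) (Fin G) ℝ) (X₁ : Matrix (Fin T) (Fin k₁) ℝ)
    (X₂ : Matrix (Fin T) (Fin k₂) ℝ) : Matrix (Fin T) (Fin T) ℝ :=
  (C1 Y X₁ X₂)ᵀ * (Dhat Y X₁ X₂)⁻¹ * C1 Y X₁ X₂

noncomputable def N2 (Y : Matrix (Fin T) (Fin G) ℝ) (X₁ : Matrix (Fin T) (Fin k₁) ℝ)
    (X₂ : Matrix (Fin T) (Fin k₂) ℝ) : Matrix (Fin T) (Fin T) ℝ :=
  1 - M1 X₁ * Y * B2 Y X₁ X₂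

noncomputable def Lam1 (Y : Matrix (Fin T) (Fin G) ℝ) (X₁ : Matrix (Fin T) (Fin k₁) ℝ)
    (X₂ : Matrix (Fin T) (Fin k₂) ℝ) : Matrix (Fin T) (Fin T) ℝ :=
  (T : ℝ)⁻¹ • (N1 X₁ X₂ * annM (N1 X₁ X₂ * Y) * N1 X₁ X₂)

noncomputable def Lam2 (Y : Matrix (Fin T) (Fin G) ℝ) (X₁ : Matrix (Fin T) (Fin k₁) ℝ)
    (X₂ : Matrix (Fin T) (Fin k₂) ℝ) : Matrix (Fin T) (Fin T) ℝ :=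
  M1 X₁ * ((T : ℝ)⁻¹ • annM (M1 X₁ * Y) - Psi0 Y X₁ X₂) * M1 X₁

noncomputable def Lam3 (Y : Matrix (Fin T) (Fin G) ℝ) (X₁ : Matrix (Fin T) (Fin k₁) ℝ)
    (X₂ : Matrix (Fin T) (Fin k₂) ℝ) : Matrix (Fin T) (Fin T) ℝ :=
  (T : ℝ)⁻¹ • (M1 X₁ * (N2 Y X₁ X₂)ᵀ * N2 Y X₁ X₂ * M1 X₁)

noncomputable def Lam4 (Y : Matrix (Fin T) (Fin G) ℝ) (X₁ : Matrix (Fin T) (Fin k₁) ℝ) :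
    Matrix (Fin T) (Fin T) ℝ :=
  (T : ℝ)⁻¹ • (M1 X₁ * annM (M1 X₁ * Y) * M1 X₁)

def Ybar (Y : Matrix (Fin T) (Fin G) ℝ) (X₁ : Matrix (Fin T) (Fin k₁) ℝ) :
    Matrix (Fin T) (Fin G ⊕ Fin k₁) ℝ :=
  fromCols Y X₁

def Zfull (Y : Matrix (Fin T) (Fin G) ℝ) (X₁ : Matrix (Fin T) (Fin k₁) ℝ)
    (X₂ : Matrix (Fin T) (Fin k₂) ℝ) : Matrix (Fin T) (Fin G ⊕ (Fin k₁ ⊕ Fin k₂)) ℝ :=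
  fromCols Y (fromCols X₁ X₂)

noncomputable def PsiR (Y : Matrix (Fin T) (Fin G) ℝ) (X₁ : Matrix (Fin T) (Fin k₁) ℝ)
    (X₂ : Matrix (Fin T) (Fin k₂) ℝ) : Matrix (Fin T) (Fin T) ℝ :=
  (T : ℝ)⁻¹ • (annM (Ybar Y X₁) - annM (Zfull Y X₁ X₂))

noncomputable def LamR (Y : Matrix (Fin T) (Fin G) ℝ) (X₁ : Matrix (Fin T) (Fin k₁) ℝ)
    (X₂ : Matrix (Fin T) (Fin k₂) ℝ) : Matrix (Fin T) (Fin T) ℝ :=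
  (T : ℝ)⁻¹ • annM (Zfull Y X₁ X₂)

/-- `σ̂² = (1/T)(y−Yβ̂)ᵀM₁(y−Yβ̂)`. -/
noncomputable def sigHat2 (y : Fin T → ℝ) (Y : Matrix (Fin T) (Fin G) ℝ)
    (X₁ : Matrix (Fin T) (Fin k₁) ℝ) : ℝ :=
  (T : ℝ)⁻¹ * ((y - Y *ᵥ betaOLS y Y X₁) ⬝ᵥ (M1 X₁ *ᵥ (y - Y *ᵥ betaOLS y Y X₁)))

/-- `σ̃² = (1/T)(y−Yβ̃)ᵀM₁(y−Yβ̃)`. -/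
noncomputable def sigTil2 (y : Fin T → ℝ) (Y : Matrix (Fin T) (Fin G) ℝ)
    (X₁ : Matrix (Fin T) (Fin k₁) ℝ) (X₂ : Matrix (Fin T) (Fin k₂) ℝ) : ℝ :=
  (T : ℝ)⁻¹ * ((y - Y *ᵥ beta2S y Y X₁ X₂) ⬝ᵥ (M1 X₁ *ᵥ (y - Y *ᵥ beta2S y Y X₁ X₂)))

/-- `σ̃₁² = (1/T)(y−Yβ̃)ᵀN₁(y−Yβ̃)`. -/
noncomputable def sigTil1sq (y : Fin T → ℝ) (Y : Matrix (Fin T) (Fin G) ℝ)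
    (X₁ : Matrix (Fin T) (Fin k₁) ℝ) (X₂ : Matrix (Fin T) (Fin k₂) ℝ) : ℝ :=
  (T : ℝ)⁻¹ * ((y - Y *ᵥ beta2S y Y X₁ X₂) ⬝ᵥ (N1 X₁ X₂ *ᵥ (y - Y *ᵥ beta2S y Y X₁ X₂)))

/-- `σ̃₂² = σ̂² − (β̃−β̂)ᵀΔ̂⁻¹(β̃−β̂)`. -/
noncomputable def sigTil2sq (y : Fin T → ℝ) (Y : Matrix (Fin T) (Fin G) ℝ)
    (X₁ : Matrix (Fin T) (Fin k₁) ℝ) (X₂ : Matrix (Fin T) (Fin k₂) ℝ) : ℝ :=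
  sigHat2 y Y X₁ -
    (beta2S y Y X₁ X₂ - betaOLS y Y X₁) ⬝ᵥ
      ((Dhat Y X₁ X₂)⁻¹ *ᵥ (beta2S y Y X₁ X₂ - betaOLS y Y X₁))

/-- The rank condition: `X₁`, `X = [X₁, X₂]`, `[Y, X]` and `[P̄[X]Y, X₁]` all have
full column rank. -/
def RankCond (Y : Matrix (Fin T) (Fin G) ℝ) (X₁ : Matrix (Fin T) (Fin k₁) ℝ)
    (X₂ : Matrix (Fin T) (Fin k₂) ℝ) : Prop :=
  X₁.rank = k₁ ∧ (fromCols X₁ X₂).rank = k₁ + k₂ ∧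
    (fromCols Y (fromCols X₁ X₂)).rank = G + (k₁ + k₂) ∧
    (fromCols (Pm X₁ X₂ * Y) X₁).rank = G + k₁

section LinearAlgebra

variable {K : Type*} [Field K] {m n : Type*} [Fintype n]

theorem Matrix.mulVec_injective_of_rank_eq_card {A : Matrix m n K}
    (h : A.rank = Fintype.card n) : Function.Injective A.mulVec := by
  have hdim := LinearMap.finrank_range_add_finrank_ker A.mulVecLin
  rw [Module.finrank_pi, ← Matrix.rank, h, Nat.add_eq_left, Submodule.finrank_eq_zero,
    LinearMap.ker_eq_bot] at hdim
  exact hdim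

variable [DecidableEq n]

theorem Matrix.isUnit_inv_sub_inv {A B : Matrix n n K} (hA : IsUnit A) (hB : IsUnit B)
    (hBA : IsUnit (B - A)) : IsUnit (A⁻¹ - B⁻¹) := by
  rw [Matrix.inv_sub_inv (iff_of_true hA hB)]
  exact ((isUnit_nonsing_inv_iff.mpr hA).mul hBA).mul (isUnit_nonsing_inv_iff.mpr hB)

theorem Matrix.inv_inv_smul {A : Matrix n n K} (hA : IsUnit A) {c : K} (hc : c ≠ 0) :
    (c⁻¹ • A)⁻¹ = c • A⁻¹ := by
  have := Matrix.inv_smul' (A := A) (Units.mk0 c hc)⁻¹ ((Matrix.isUnit_iff_isUnit_det A).mp hA)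
  simpa [Units.smul_def] using this

variable [Fintype m]

theorem Matrix.mul_transpose_mul_inv_mul {C : Matrix n m K} {D : Matrix n n K} {c : K}
    (hC : C * Cᵀ = c • D) (hD : IsUnit D) : C * (Cᵀ * D⁻¹ * C) = c • C := by
  rw [← Matrix.mul_assoc, ← Matrix.mul_assoc, hC, Matrix.smul_mul, Matrix.smul_mul,
    Matrix.mul_nonsing_inv _ ((Matrix.isUnit_iff_isUnit_det D).mp hD), Matrix.one_mul]

theorem Matrix.transpose_mul_inv_mul_mul_self {C : Matrix n m K} {D : Matrix n n K} {c : K}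
    (hC : C * Cᵀ = c • D) (hD : IsUnit D) :
    (Cᵀ * D⁻¹ * C) * (Cᵀ * D⁻¹ * C) = c • (Cᵀ * D⁻¹ * C) := by
  rw [Matrix.mul_assoc (Cᵀ * D⁻¹), Matrix.mul_transpose_mul_inv_mul hC hD, Matrix.mul_smul]

end LinearAlgebra

section LeastSquares

variable {K : Type*} [CommRing K] {m n : Type*} [Fintype m]

theorem Matrix.IsSymm.transpose_mul_mul {Q : Matrix m m K} (hQ : Q.IsSymm) (Y : Matrix m n K) :
    (Yᵀ * Q * Y).IsSymm := by
  rw [Matrix.IsSymm, transpose_mul, transpose_mul, transpose_transpose, hQ.eq, Matrix.mul_assoc]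

variable [Fintype n] [DecidableEq n]

/-- `B1 Y X₁ = lsCoef (M1 X₁) Y` and `B2 Y X₁ X₂ = lsCoef (N1 X₁ X₂) Y` definitionally. -/
noncomputable def lsCoef (Q : Matrix m m K) (Y : Matrix m n K) : Matrix n m K :=
  (Yᵀ * Q * Y)⁻¹ * (Yᵀ * Q)

theorem lsCoef_mul_transpose_lsCoef {Q R : Matrix m m K} {Y : Matrix m n K} (hR : R.IsSymm)
    (hQR : Q * R = R) (hRY : IsUnit (Yᵀ * R * Y)) :
    lsCoef Q Y * (lsCoef R Y)ᵀ = (Yᵀ * Q * Y)⁻¹ := by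
  rw [lsCoef, lsCoef, transpose_mul, transpose_nonsing_inv, (hR.transpose_mul_mul Y).eq,
    transpose_mul, transpose_transpose, hR.eq]
  calc (Yᵀ * Q * Y)⁻¹ * (Yᵀ * Q) * (R * Y * (Yᵀ * R * Y)⁻¹)
      = (Yᵀ * Q * Y)⁻¹ * (Yᵀ * (Q * R) * Y) * (Yᵀ * R * Y)⁻¹ := by
        simp only [Matrix.mul_assoc]
    _ = (Yᵀ * Q * Y)⁻¹ := by
        rw [hQR, mul_nonsing_inv_cancel_right _ _ ((isUnit_iff_isUnit_det _).mp hRY)]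

theorem lsCoef_mul_transpose_lsCoef_symm {Q R : Matrix m m K} {Y : Matrix m n K}
    (hQ : Q.IsSymm) (hR : R.IsSymm) (hQR : Q * R = R) (hRY : IsUnit (Yᵀ * R * Y)) :
    lsCoef R Y * (lsCoef Q Y)ᵀ = (Yᵀ * Q * Y)⁻¹ := by
  rw [← transpose_transpose (lsCoef R Y), ← transpose_mul,
    lsCoef_mul_transpose_lsCoef hR hQR hRY, transpose_nonsing_inv,
    (hQ.transpose_mul_mul Y).eq]

end LeastSquares

section Gram

variable {m n : Type*} [Fintype m] [Fintype n] [DecidableEq n]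

theorem Matrix.isUnit_transpose_mul_self_of_injective {A : Matrix m n ℝ}
    (hA : Function.Injective A.mulVec) : IsUnit (Aᵀ * A) := by
  rw [← conjTranspose_eq_transpose_of_trivial]
  exact (PosDef.conjTranspose_mul_self A hA).isUnit

theorem Matrix.isUnit_transpose_mul_mul_of_injective {Q : Matrix m m ℝ}
    (hQs : Q.IsSymm) (hQi : IsIdempotentElem Q) {Y : Matrix m n ℝ}
    (hY : Function.Injective (Q * Y).mulVec) : IsUnit (Yᵀ * Q * Y) := by
  have hgram : Yᵀ * Q * Y = (Q * Y)ᵀ * (Q * Y) := by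
    rw [transpose_mul, hQs.eq, ← Matrix.mul_assoc (Yᵀ * Q) Q Y, Matrix.mul_assoc Yᵀ Q Q, hQi.eq]
  rw [hgram]
  exact isUnit_transpose_mul_self_of_injective hY

end Gram

section Projections

variable {n p : Type*} [Fintype n] [DecidableEq n] [Fintype p]

theorem projM_isSymm (A : Matrix (Fin T) n ℝ) : (projM A).IsSymm := by
  have hinv : ((Aᵀ * A)⁻¹)ᵀ = (Aᵀ * A)⁻¹ := by
    rw [transpose_nonsing_inv, transpose_mul, transpose_transpose]
  rw [Matrix.IsSymm, projM, transpose_mul, transpose_mul, transpose_transpose, hinv,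
    Matrix.mul_assoc]

theorem projM_mul_self {A : Matrix (Fin T) n ℝ} (hA : IsUnit (Aᵀ * A)) : projM A * A = A := by
  rw [projM, Matrix.mul_assoc _ Aᵀ,
    nonsing_inv_mul_cancel_right _ _ ((isUnit_iff_isUnit_det _).mp hA)]

theorem projM_mul_projM_of_projM_mul_eq [DecidableEq p] {A : Matrix (Fin T) n ℝ}
    {B : Matrix (Fin T) p ℝ} (h : projM A * B = B) : projM A * projM B = projM B := by
  rw [projM.eq_1 B, ← Matrix.mul_assoc, ← Matrix.mul_assoc, h]

theorem isIdempotentElem_projM {A : Matrix (Fin T) n ℝ} (hA : IsUnit (Aᵀ * A)) :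
    IsIdempotentElem (projM A) :=
  projM_mul_projM_of_projM_mul_eq (projM_mul_self hA)

theorem annM_isSymm (A : Matrix (Fin T) n ℝ) : (annM A).IsSymm :=
  isSymm_one.sub (projM_isSymm A)

theorem isIdempotentElem_annM {A : Matrix (Fin T) n ℝ} (hA : IsUnit (Aᵀ * A)) :
    IsIdempotentElem (annM A) :=
  (isIdempotentElem_projM hA).one_sub

theorem annM_mul_mulVec_injective {A : Matrix (Fin T) n ℝ} {Y : Matrix (Fin T) p ℝ}
    (h : Function.Injective (fromCols Y A).mulVec) : Function.Injective (annM A * Y).mulVec := by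
  intro v w hvw
  set u := ((Aᵀ * A)⁻¹ * Aᵀ) *ᵥ (Y *ᵥ (v - w))
  have hY : Y *ᵥ (v - w) = A *ᵥ u := by
    have h0 : annM A *ᵥ (Y *ᵥ (v - w)) = 0 := by
      rw [mulVec_mulVec, mulVec_sub, hvw, sub_self]
    rwa [annM, sub_mulVec, one_mulVec, sub_eq_zero, projM, Matrix.mul_assoc,
      ← mulVec_mulVec] at h0
  have hker : (v - w) ⊕ᵥ (-u) = 0 := h <| by
    rw [fromCols_mulVec_sumElim, mulVec_neg, hY, add_neg_cancel, mulVec_zero]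
  exact sub_eq_zero.mp (congrArg (· ∘ Sum.inl) hker)

end Projections

namespace RankCond

variable {Y : Matrix (Fin T) (Fin G) ℝ} {X₁ : Matrix (Fin T) (Fin k₁) ℝ}
  {X₂ : Matrix (Fin T) (Fin k₂) ℝ}

theorem isUnit_gram_X₁ (h : RankCond Y X₁ X₂) : IsUnit (X₁ᵀ * X₁) :=
  isUnit_transpose_mul_self_of_injective <|
    mulVec_injective_of_rank_eq_card (by rw [Fintype.card_fin]; exact h.1)

theorem isUnit_gram_X (h : RankCond Y X₁ X₂) :
    IsUnit ((fromCols X₁ X₂)ᵀ * fromCols X₁ X₂) :=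
  isUnit_transpose_mul_self_of_injective <|
    mulVec_injective_of_rank_eq_card <| by
      simp only [Fintype.card_sum, Fintype.card_fin]; exact h.2.1

theorem Pm_mul_projM (h : RankCond Y X₁ X₂) : Pm X₁ X₂ * projM X₁ = projM X₁ := by
  set E := Matrix.fromRows (1 : Matrix (Fin k₁) (Fin k₁) ℝ) (0 : Matrix (Fin k₂) (Fin k₁) ℝ)
  have hX₁ : fromCols X₁ X₂ * E = X₁ := by
    rw [fromCols_mul_fromRows, Matrix.mul_one, Matrix.mul_zero, add_zero]
  refine projM_mul_projM_of_projM_mul_eq ?_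
  calc projM (fromCols X₁ X₂) * X₁ = projM (fromCols X₁ X₂) * fromCols X₁ X₂ * E := by
        rw [Matrix.mul_assoc, hX₁]
    _ = X₁ := by rw [projM_mul_self h.isUnit_gram_X, hX₁]

theorem projM_mul_Pm (h : RankCond Y X₁ X₂) : projM X₁ * Pm X₁ X₂ = projM X₁ := by
  have h' := congrArg transpose h.Pm_mul_projM
  rwa [transpose_mul, (projM_isSymm _).eq, Pm, (projM_isSymm _).eq] at h'

theorem N1_eq (h : RankCond Y X₁ X₂) : N1 X₁ X₂ = Pm X₁ X₂ - projM X₁ := by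
  rw [N1, M1, annM, Matrix.sub_mul, Matrix.one_mul, h.projM_mul_Pm]

theorem N1_isSymm (h : RankCond Y X₁ X₂) : (N1 X₁ X₂).IsSymm := by
  rw [h.N1_eq]
  exact (projM_isSymm _).sub (projM_isSymm _)

theorem isIdempotentElem_N1 (h : RankCond Y X₁ X₂) : IsIdempotentElem (N1 X₁ X₂) := by
  rw [h.N1_eq]
  exact (isIdempotentElem_projM h.isUnit_gram_X₁).sub (isIdempotentElem_projM h.isUnit_gram_X)
    h.projM_mul_Pm h.Pm_mul_projM

theorem M1_mul_N1 (h : RankCond Y X₁ X₂) : M1 X₁ * N1 X₁ X₂ = N1 X₁ X₂ := by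
  rw [N1, ← Matrix.mul_assoc, M1, (isIdempotentElem_annM h.isUnit_gram_X₁).eq]

theorem Mm_eq (h : RankCond Y X₁ X₂) : Mm X₁ X₂ = M1 X₁ - N1 X₁ X₂ := by
  rw [h.N1_eq, Mm, M1, annM, annM, Pm]
  abel

theorem Mm_mul_M1 (h : RankCond Y X₁ X₂) : Mm X₁ X₂ * M1 X₁ = Mm X₁ X₂ := by
  rw [Mm, M1, annM, annM, ← Pm, Matrix.mul_sub, Matrix.mul_one, Matrix.sub_mul, Matrix.one_mul,
    h.Pm_mul_projM, sub_self, sub_zero]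

theorem Mm_mul_mulVec_injective (h : RankCond Y X₁ X₂) :
    Function.Injective (Mm X₁ X₂ * Y).mulVec :=
  annM_mul_mulVec_injective <| mulVec_injective_of_rank_eq_card <| by
    simp only [Fintype.card_sum, Fintype.card_fin]; exact h.2.2.1

theorem isUnit_gram_Mm (h : RankCond Y X₁ X₂) : IsUnit (Yᵀ * Mm X₁ X₂ * Y) :=
  isUnit_transpose_mul_mul_of_injective (annM_isSymm _) (isIdempotentElem_annM h.isUnit_gram_X)
    h.Mm_mul_mulVec_injective

theorem isUnit_gram_M1 (h : RankCond Y X₁ X₂) : IsUnit (Yᵀ * M1 X₁ * Y) := by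
  refine isUnit_transpose_mul_mul_of_injective (Q := M1 X₁) (annM_isSymm _)
    (isIdempotentElem_annM h.isUnit_gram_X₁) (.of_comp (f := (Mm X₁ X₂).mulVec) ?_)
  simpa only [Function.comp_def, mulVec_mulVec, ← Matrix.mul_assoc, h.Mm_mul_M1]
    using h.Mm_mul_mulVec_injective

theorem isUnit_gram_N1 (h : RankCond Y X₁ X₂) : IsUnit (Yᵀ * N1 X₁ X₂ * Y) := by
  refine isUnit_transpose_mul_mul_of_injective h.N1_isSymm h.isIdempotentElem_N1 ?_
  rw [N1, Matrix.mul_assoc]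
  exact annM_mul_mulVec_injective <| mulVec_injective_of_rank_eq_card <| by
    simp only [Fintype.card_sum, Fintype.card_fin]; exact h.2.2.2

theorem B1_mul_transpose_B1 (h : RankCond Y X₁ X₂) :
    B1 Y X₁ * (B1 Y X₁)ᵀ = (Yᵀ * M1 X₁ * Y)⁻¹ :=
  lsCoef_mul_transpose_lsCoef (annM_isSymm _) (isIdempotentElem_annM h.isUnit_gram_X₁).eq
    h.isUnit_gram_M1

theorem B1_mul_transpose_B2 (h : RankCond Y X₁ X₂) :
    B1 Y X₁ * (B2 Y X₁ X₂)ᵀ = (Yᵀ * M1 X₁ * Y)⁻¹ :=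
  lsCoef_mul_transpose_lsCoef h.N1_isSymm h.M1_mul_N1 h.isUnit_gram_N1

theorem B2_mul_transpose_B1 (h : RankCond Y X₁ X₂) :
    B2 Y X₁ X₂ * (B1 Y X₁)ᵀ = (Yᵀ * M1 X₁ * Y)⁻¹ :=
  lsCoef_mul_transpose_lsCoef_symm (annM_isSymm _) h.N1_isSymm h.M1_mul_N1 h.isUnit_gram_N1

theorem B2_mul_transpose_B2 (h : RankCond Y X₁ X₂) :
    B2 Y X₁ X₂ * (B2 Y X₁ X₂)ᵀ = (Yᵀ * N1 X₁ X₂ * Y)⁻¹ :=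
  lsCoef_mul_transpose_lsCoef h.N1_isSymm h.isIdempotentElem_N1.eq h.isUnit_gram_N1

theorem C1_mul_transpose_C1 (h : RankCond Y X₁ X₂) :
    C1 Y X₁ X₂ * (C1 Y X₁ X₂)ᵀ = (Yᵀ * N1 X₁ X₂ * Y)⁻¹ - (Yᵀ * M1 X₁ * Y)⁻¹ := by
  rw [C1, transpose_sub, Matrix.mul_sub, Matrix.sub_mul, Matrix.sub_mul, h.B1_mul_transpose_B1,
    h.B1_mul_transpose_B2, h.B2_mul_transpose_B1, h.B2_mul_transpose_B2, sub_self, sub_zero]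

theorem isUnit_C1_mul_transpose_C1 (h : RankCond Y X₁ X₂) :
    IsUnit (C1 Y X₁ X₂ * (C1 Y X₁ X₂)ᵀ) := by
  rw [h.C1_mul_transpose_C1]
  refine isUnit_inv_sub_inv h.isUnit_gram_N1 h.isUnit_gram_M1 ?_
  rw [← Matrix.sub_mul, ← Matrix.mul_sub, ← h.Mm_eq]
  exact h.isUnit_gram_Mm

end RankCond

theorem stmt6_general {T G k₁ k₂ : ℕ}
    (hT : 0 < T)
    (Y : Matrix (Fin T) (Fin G) ℝ)
    (X₁ : Matrix (Fin T) (Fin k₁) ℝ) (X₂ : Matrix (Fin T) (Fin k₂) ℝ)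
    (hrank : RankCond Y X₁ X₂) :
    B1 Y X₁ * (B1 Y X₁)ᵀ = (T : ℝ)⁻¹ • (OmLS Y X₁)⁻¹ ∧
    B1 Y X₁ * (B2 Y X₁ X₂)ᵀ = (T : ℝ)⁻¹ • (OmLS Y X₁)⁻¹ ∧
    B2 Y X₁ X₂ * (B1 Y X₁)ᵀ = (T : ℝ)⁻¹ • (OmLS Y X₁)⁻¹ ∧
    B2 Y X₁ X₂ * (B2 Y X₁ X₂)ᵀ = (T : ℝ)⁻¹ • (OmIV Y X₁ X₂)⁻¹ ∧
    C1 Y X₁ X₂ * (C1 Y X₁ X₂)ᵀ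
      = (T : ℝ)⁻¹ • ((OmIV Y X₁ X₂)⁻¹ - (OmLS Y X₁)⁻¹) ∧
    C1 Y X₁ X₂ * (C1 Y X₁ X₂)ᵀ = (T : ℝ)⁻¹ • Dhat Y X₁ X₂ ∧
    C1 Y X₁ X₂ * Psi0 Y X₁ X₂ = (T : ℝ)⁻¹ • C1 Y X₁ X₂ ∧
    Psi0 Y X₁ X₂ * Psi0 Y X₁ X₂ = (T : ℝ)⁻¹ • Psi0 Y X₁ X₂ := by
  have hT' : (T : ℝ) ≠ 0 := Nat.cast_ne_zero.mpr hT.ne'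
  have hLS : (T : ℝ)⁻¹ • (OmLS Y X₁)⁻¹ = (Yᵀ * M1 X₁ * Y)⁻¹ := by
    rw [OmLS, inv_inv_smul hrank.isUnit_gram_M1 hT', inv_smul_smul₀ hT']
  have hIV : (T : ℝ)⁻¹ • (OmIV Y X₁ X₂)⁻¹ = (Yᵀ * N1 X₁ X₂ * Y)⁻¹ := by
    rw [OmIV, inv_inv_smul hrank.isUnit_gram_N1 hT', inv_smul_smul₀ hT']
  have hCC : C1 Y X₁ X₂ * (C1 Y X₁ X₂)ᵀ = (T : ℝ)⁻¹ • Dhat Y X₁ X₂ := by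
    rw [Dhat, smul_sub, hIV, hLS, hrank.C1_mul_transpose_C1]
  have hD : IsUnit (Dhat Y X₁ X₂) := by
    rw [← isUnit_smul_iff (Units.mk0 (T : ℝ)⁻¹ (inv_ne_zero hT')), Units.smul_def,
      Units.val_mk0, ← hCC]
    exact hrank.isUnit_C1_mul_transpose_C1
  refine ⟨?_, ?_, ?_, ?_, ?_, hCC, mul_transpose_mul_inv_mul hCC hD,
    transpose_mul_inv_mul_mul_self hCC hD⟩
  · rw [hLS, hrank.B1_mul_transpose_B1]
  · rw [hLS, hrank.B1_mul_transpose_B2]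
  · rw [hLS, hrank.B2_mul_transpose_B1]
  · rw [hIV, hrank.B2_mul_transpose_B2]
  · rw [smul_sub, hIV, hLS, hrank.C1_mul_transpose_C1]

/-- Under the rank condition: `B₁B₁ᵀ = B₁B₂ᵀ = B₂B₁ᵀ = (1/T)Ω̂_LS⁻¹`,
`B₂B₂ᵀ = (1/T)Ω̂_IV⁻¹`, `C₁C₁ᵀ = (1/T)(Ω̂_IV⁻¹ − Ω̂_LS⁻¹) = (1/T)Δ̂`,
`C₁Ψ₀ = (1/T)C₁`, and `Ψ₀Ψ₀ = (1/T)Ψ₀`. -/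
theorem stmt6 {T G k₁ k₂ : ℕ}
    (hT : 0 < T) (hG : 0 < G) (hk₁ : 0 < k₁) (hk₂ : 0 < k₂)
    (Y : Matrix (Fin T) (Fin G) ℝ)
    (X₁ : Matrix (Fin T) (Fin k₁) ℝ) (X₂ : Matrix (Fin T) (Fin k₂) ℝ)
    (hrank : RankCond Y X₁ X₂) :
    B1 Y X₁ * (B1 Y X₁)ᵀ = (T : ℝ)⁻¹ • (OmLS Y X₁)⁻¹ ∧
    B1 Y X₁ * (B2 Y X₁ X₂)ᵀ = (T : ℝ)⁻¹ • (OmLS Y X₁)⁻¹ ∧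
    B2 Y X₁ X₂ * (B1 Y X₁)ᵀ = (T : ℝ)⁻¹ • (OmLS Y X₁)⁻¹ ∧
    B2 Y X₁ X₂ * (B2 Y X₁ X₂)ᵀ = (T : ℝ)⁻¹ • (OmIV Y X₁ X₂)⁻¹ ∧
    C1 Y X₁ X₂ * (C1 Y X₁ X₂)ᵀ
      = (T : ℝ)⁻¹ • ((OmIV Y X₁ X₂)⁻¹ - (OmLS Y X₁)⁻¹) ∧
    C1 Y X₁ X₂ * (C1 Y X₁ X₂)ᵀ = (T : ℝ)⁻¹ • Dhat Y X₁ X₂ ∧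
    C1 Y X₁ X₂ * Psi0 Y X₁ X₂ = (T : ℝ)⁻¹ • C1 Y X₁ X₂ ∧
    Psi0 Y X₁ X₂ * Psi0 Y X₁ X₂ = (T : ℝ)⁻¹ • Psi0 Y X₁ X₂ :=
  stmt6_general hT Y X₁ X₂ hrank
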